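/- arXiv:0809.1834 — 2 statements merged into one kernel-verified Lean document; each statement's English description precedes it below -/
import Mathlib

section
/- Suppose for a given control problem with running cost h(α)=‖α‖²_{L²}/2 the final-cost functional satisfies |g(φ¹(T)) − g(φ²(T))| ≤ R ∫_{t₀}^T ‖α¹ − α²‖ dt whenever α², φ² arise from truncating α¹ to zero on the set {t : ‖α¹(t)‖ > 2R}. Then v(α²) ≤ v(α¹), where v(α) = ∫_{t₀}^T ‖α(t)‖²/2 dt + g(φ(T)). Consequently the infimum of v over all L² controls equals the infimum over controls bounded by 2R in L^∞(t₀,T;L²). -/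
/-!
Where `‖α t‖ > 2R`, truncation saves the running cost `‖α t‖²/2 ≥ R ‖α t‖ = R ‖α t - trunc α t‖`,
while by hypothesis the terminal cost grows by at most `R ∫ ‖trunc α - α‖`; so `v (trunc α) ≤ v α`.
As `trunc α` is bounded by `2R`, every cost over all controls is dominated by a cost over bounded
controls, and the infima agree (also when the sets are unbounded below and `sInf` is junk).
-/

open MeasureTheory intervalIntegral

section Truncate

variable {X E : Type*} [NormedAddCommGroup E]

noncomputable def truncate (r : ℝ) (α : X → E) : X → E := fun t => if ‖α t‖ ≤ r then α t else 0

section Pointwise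

variable (r : ℝ) (α : X → E) (t : X)

lemma norm_truncate : ‖truncate r α t‖ = (Set.Iic r).indicator id ‖α t‖ := by
  by_cases h : ‖α t‖ ≤ r <;> simp [truncate, h]

lemma norm_truncate_sub : ‖truncate r α t - α t‖ = (Set.Ioi r).indicator id ‖α t‖ := by
  by_cases h : ‖α t‖ ≤ r <;> simp [truncate, h, lt_of_not_ge]

lemma norm_truncate_le_norm : ‖truncate r α t‖ ≤ ‖α t‖ := by
  by_cases h : ‖α t‖ ≤ r <;> simp [truncate, h]

lemma norm_truncate_le {r : ℝ} (hr : 0 ≤ r) : ‖truncate r α t‖ ≤ r := by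
  by_cases h : ‖α t‖ ≤ r <;> simp [truncate, h, hr]

lemma sq_norm_truncate_div_two_add_mul_le {R : ℝ} (hR : 0 ≤ R) :
    ‖truncate (2 * R) α t‖ ^ 2 / 2 + R * ‖truncate (2 * R) α t - α t‖ ≤ ‖α t‖ ^ 2 / 2 := by
  by_cases h : ‖α t‖ ≤ 2 * R
  · simp [truncate, h]
  · simp only [truncate, h, if_false, norm_zero, zero_sub, norm_neg]
    nlinarith

end Pointwise

section Integral

variable [MeasurableSpace X] {μ : Measure X} {α : X → E}

lemma aemeasurable_norm_of_sq (h : AEMeasurable (fun t => ‖α t‖ ^ 2) μ) :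
    AEMeasurable (fun t => ‖α t‖) μ := by
  simpa only [Real.sqrt_sq (norm_nonneg _)] using h.sqrt

lemma integrable_sq_norm_truncate (r : ℝ) (hα : Integrable (fun t => ‖α t‖ ^ 2) μ) :
    Integrable (fun t => ‖truncate r α t‖ ^ 2) μ := by
  refine hα.mono' ?_ (Filter.Eventually.of_forall fun t => ?_)
  · simp only [norm_truncate]
    exact (((measurable_id.indicator measurableSet_Iic).comp_aemeasurable
      (aemeasurable_norm_of_sq hα.aemeasurable)).pow_const 2).aestronglyMeasurable
  · simpa using pow_le_pow_left₀ (norm_nonneg _) (norm_truncate_le_norm r α t) 2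

lemma integral_truncate_add_le {R : ℝ} (hR : 0 ≤ R) (hα : Integrable (fun t => ‖α t‖ ^ 2) μ) :
    (∫ t, ‖truncate (2 * R) α t‖ ^ 2 / 2 ∂μ) + R * ∫ t, ‖truncate (2 * R) α t - α t‖ ∂μ
      ≤ ∫ t, ‖α t‖ ^ 2 / 2 ∂μ := by
  have hcost : Integrable (fun t => ‖truncate (2 * R) α t‖ ^ 2 / 2) μ :=
    (integrable_sq_norm_truncate _ hα).div_const 2
  have hsaving : Integrable (fun t => R * ‖truncate (2 * R) α t - α t‖) μ := by
    refine (hα.div_const 2).mono' ?_ (Filter.Eventually.of_forall fun t => ?_)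
    · simp only [norm_truncate_sub]
      exact (((measurable_id.indicator measurableSet_Ioi).comp_aemeasurable
        (aemeasurable_norm_of_sq hα.aemeasurable)).const_mul R).aestronglyMeasurable
    · rw [Real.norm_of_nonneg (by positivity)]
      linarith [sq_norm_truncate_div_two_add_mul_le α t hR,
        (by positivity : 0 ≤ ‖truncate (2 * R) α t‖ ^ 2 / 2)]
  rw [← MeasureTheory.integral_const_mul, ← integral_add hcost hsaving]
  exact integral_mono (hcost.add hsaving) (hα.div_const 2)
    fun t => sq_norm_truncate_div_two_add_mul_le α t hR

end Integral

lemma IntervalIntegrable.sq_norm_truncate {α : ℝ → E} {a b : ℝ} (r : ℝ)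
    (hα : IntervalIntegrable (fun t => ‖α t‖ ^ 2) volume a b) :
    IntervalIntegrable (fun t => ‖truncate r α t‖ ^ 2) volume a b :=
  intervalIntegrable_iff.mpr (integrable_sq_norm_truncate r (intervalIntegrable_iff.mp hα))

lemma intervalIntegral_truncate_add_le {α : ℝ → E} {t₀ T R : ℝ} (ht : t₀ ≤ T) (hR : 0 ≤ R)
    (hα : IntervalIntegrable (fun t => ‖α t‖ ^ 2) volume t₀ T) :
    (∫ t in t₀..T, ‖truncate (2 * R) α t‖ ^ 2 / 2) + R * ∫ t in t₀..T, ‖truncate (2 * R) α t - α t‖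
      ≤ ∫ t in t₀..T, ‖α t‖ ^ 2 / 2 := by
  simp only [integral_of_le ht]
  exact integral_truncate_add_le hR ((intervalIntegrable_iff_integrableOn_Ioc_of_le ht).mp hα)

end Truncate

theorem stmt3_general
    {H : Type*} [NormedAddCommGroup H]
    (t₀ T R : ℝ) (ht : t₀ ≤ T) (hR : 0 < R)
    (G : (ℝ → H) → ℝ)
    (trunc : (ℝ → H) → (ℝ → H))
    (htrunc : ∀ (α : ℝ → H) (t : ℝ), trunc α t = if ‖α t‖ ≤ 2 * R then α t else 0)
    (hG : ∀ α : ℝ → H, IntervalIntegrable (fun t => ‖α t‖ ^ 2) volume t₀ T →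
      |G (trunc α) - G α| ≤ R * ∫ t in t₀..T, ‖trunc α t - α t‖) :
    (∀ α : ℝ → H, IntervalIntegrable (fun t => ‖α t‖ ^ 2) volume t₀ T →
      (∫ t in t₀..T, ‖trunc α t‖ ^ 2 / 2) + G (trunc α)
        ≤ (∫ t in t₀..T, ‖α t‖ ^ 2 / 2) + G α) ∧
    sInf ((fun α : ℝ → H => (∫ t in t₀..T, ‖α t‖ ^ 2 / 2) + G α) ''
        {α | IntervalIntegrable (fun t => ‖α t‖ ^ 2) volume t₀ T})
      = sInf ((fun α : ℝ → H => (∫ t in t₀..T, ‖α t‖ ^ 2 / 2) + G α) ''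
        {α | IntervalIntegrable (fun t => ‖α t‖ ^ 2) volume t₀ T ∧
          ∀ t ∈ Set.Icc t₀ T, ‖α t‖ ≤ 2 * R}) := by
  obtain rfl : trunc = truncate (2 * R) := funext fun α => funext (htrunc α)
  have hdecrease : ∀ α : ℝ → H, IntervalIntegrable (fun t => ‖α t‖ ^ 2) volume t₀ T →
      (∫ t in t₀..T, ‖truncate (2 * R) α t‖ ^ 2 / 2) + G (truncate (2 * R) α)
        ≤ (∫ t in t₀..T, ‖α t‖ ^ 2 / 2) + G α := fun α hα => by
    have := intervalIntegral_truncate_add_le ht hR.le hα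
    linarith [le_of_abs_le (hG α hα)]
  refine ⟨hdecrease, csInf_eq_csInf_of_forall_exists_le ?_ ?_⟩
  · rintro _ ⟨α, hα, rfl⟩
    exact ⟨_, ⟨_, ⟨hα.sq_norm_truncate _, fun t _ => norm_truncate_le α t (by positivity)⟩, rfl⟩,
      hdecrease α hα⟩
  · rintro _ ⟨α, hα, rfl⟩
    exact ⟨_, ⟨α, hα.1, rfl⟩, le_rfl⟩

/-- Truncating a control to zero where `‖α(t)‖ > 2R` does not increase the
total cost `v(α) = ∫ ‖α‖²/2 + g(φ(T))`, provided the change in terminal cost is bounded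
by `R ∫ ‖α¹ - α²‖`.  Consequently the infimum of the cost over all (square-integrable)
controls equals the infimum over controls bounded by `2R` in `L^∞(t₀,T;L²)`.
Here `G α` abstracts the terminal cost `g(φ(T))` of the trajectory driven by `α`. -/
theorem stmt3
    {H : Type*} [NormedAddCommGroup H] [InnerProductSpace ℝ H]
    (t₀ T R : ℝ) (ht : t₀ ≤ T) (hR : 0 < R)
    (G : (ℝ → H) → ℝ)
    (trunc : (ℝ → H) → (ℝ → H))
    (htrunc : ∀ (α : ℝ → H) (t : ℝ), trunc α t = if ‖α t‖ ≤ 2 * R then α t else 0)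
    (hG : ∀ α : ℝ → H, IntervalIntegrable (fun t => ‖α t‖ ^ 2) volume t₀ T →
      |G (trunc α) - G α| ≤ R * ∫ t in t₀..T, ‖trunc α t - α t‖) :
    (∀ α : ℝ → H, IntervalIntegrable (fun t => ‖α t‖ ^ 2) volume t₀ T →
      (∫ t in t₀..T, ‖trunc α t‖ ^ 2 / 2) + G (trunc α)
        ≤ (∫ t in t₀..T, ‖α t‖ ^ 2 / 2) + G α) ∧
    sInf ((fun α : ℝ → H => (∫ t in t₀..T, ‖α t‖ ^ 2 / 2) + G α) ''
        {α | IntervalIntegrable (fun t => ‖α t‖ ^ 2) volume t₀ T})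
      = sInf ((fun α : ℝ → H => (∫ t in t₀..T, ‖α t‖ ^ 2 / 2) + G α) ''
        {α | IntervalIntegrable (fun t => ‖α t‖ ^ 2) volume t₀ T ∧
          ∀ t ∈ Set.Icc t₀ T, ‖α t‖ ≤ 2 * R}) :=
  stmt3_general t₀ T R ht hR G trunc htrunc hG
end

section
/- Let V be the space of continuous piecewise linear functions on [0,1] vanishing at 0 and 1 with uniform mesh Δx = 1/M. Then V ⊆ D(A^γ) for every γ < 3/4, where A = −δ d²/dx² with Dirichlet conditions and fractional powers defined spectrally. More precisely, for φ₀ ∈ V with distributional second derivative φ₀'' = Δx Σᵢ (D²ξ)ᵢ δ_{iΔx}, the Fourier coefficients satisfy |(ψₙ, φ₀)| ≤ (√2/(n²π²)) (Δx Σᵢ (D²ξ)ᵢ²)^{1/2}, and hence ‖A^γ φ₀‖ ≤ C_γ (Δx Σᵢ (D²ξ)ᵢ²)^{1/2} for γ < 3/4. -/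
/-!
Integrating `sin (nπx)` against the hat function at node `i` gives `-M/(nπ)²` times the
second difference of `j ↦ sin (nπ j/M)` at `i`. Summation by parts (the discrete Laplacian
is symmetric under Dirichlet conditions) moves that second difference onto `ξ`, so
`(ψₙ, φ₀) = -(nπ)⁻² Δx Σᵢ (D²ξ)ᵢ ψₙ(iΔx)`: this is `φ₀'' = Δx Σᵢ (D²ξ)ᵢ δ_{iΔx}` tested
against `ψₙ`. Cauchy–Schwarz with `|ψₙ| ≤ √2` gives the `n⁻²` decay, and then
`Σ kₙ^{2γ} (ψₙ, φ₀)²` is dominated by a multiple of `Σ n^{4γ-4}`, finite since `γ < 3/4`.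
-/

open intervalIntegral

/-- Eigenvalues `kₙ = δπ²n²` (n ≥ 1); `kEig δ n` corresponds to `ψ_{n+1}`. -/
noncomputable def kEig (δ : ℝ) (n : ℕ) : ℝ := δ * Real.pi ^ 2 * ((n : ℝ) + 1) ^ 2

/-- The nodal hat basis function at node `i Δx`, `Δx = 1/M`. -/
noncomputable def hatFn (M i : ℕ) (x : ℝ) : ℝ := max 0 (1 - |(M : ℝ) * x - (i : ℝ)|)

/-- The piecewise linear function with nodal values `ξ i`. -/
noncomputable def plf (M : ℕ) (ξ : ℕ → ℝ) (x : ℝ) : ℝ :=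
  ∑ i ∈ Finset.Icc 1 (M - 1), ξ i * hatFn M i x

/-- The second difference quotient `(D²ξ)ᵢ = (ξ_{i+1} - 2ξᵢ + ξ_{i-1})/Δx²`, `Δx = 1/M`. -/
noncomputable def d2q (M : ℕ) (ξ : ℕ → ℝ) (i : ℕ) : ℝ :=
  (M : ℝ) ^ 2 * (ξ (i + 1) - 2 * ξ i + ξ (i - 1))

/-- Fourier coefficient `(ψₙ, φ₀)` with `ψₙ(x) = √2 sin(nπx)`. -/
noncomputable def fcoef (M : ℕ) (ξ : ℕ → ℝ) (n : ℕ) : ℝ :=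
  ∫ x in (0 : ℝ)..1, Real.sqrt 2 * Real.sin ((n : ℝ) * Real.pi * x) * plf M ξ x

open Finset Real MeasureTheory

@[fun_prop]
theorem continuous_hatFn (M i : ℕ) : Continuous (hatFn M i) := by
  unfold hatFn; fun_prop

section HatFunction

variable {M i : ℕ} {x : ℝ}

theorem hatFn_eq_zero_of_le (hM : 0 < (M : ℝ)) (hx : x ≤ ((i : ℝ) - 1) / M) :
    hatFn M i x = 0 := by
  rw [le_div_iff₀ hM] at hx
  refine max_eq_left (sub_nonpos.2 (le_abs.2 (Or.inr ?_)))
  linarith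

theorem hatFn_eq_zero_of_ge (hM : 0 < (M : ℝ)) (hx : ((i : ℝ) + 1) / M ≤ x) :
    hatFn M i x = 0 := by
  rw [div_le_iff₀ hM] at hx
  refine max_eq_left (sub_nonpos.2 (le_abs.2 (Or.inl ?_)))
  linarith

theorem hatFn_eq_of_mem_Icc_left (hM : 0 < (M : ℝ))
    (hx : x ∈ Set.Icc (((i : ℝ) - 1) / M) ((i : ℝ) / M)) :
    hatFn M i x = M * x + (1 - i) := by
  rw [Set.mem_Icc, div_le_iff₀ hM, le_div_iff₀ hM] at hx
  rw [hatFn, abs_of_nonpos (by linarith), max_eq_right (by linarith)]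
  ring

theorem hatFn_eq_of_mem_Icc_right (hM : 0 < (M : ℝ))
    (hx : x ∈ Set.Icc ((i : ℝ) / M) (((i : ℝ) + 1) / M)) :
    hatFn M i x = -M * x + (i + 1) := by
  rw [Set.mem_Icc, div_le_iff₀ hM, le_div_iff₀ hM] at hx
  rw [hatFn, abs_of_nonneg (by linarith), max_eq_right (by linarith)]
  ring

end HatFunction

theorem integral_sin_mul_affine {a : ℝ} (ha : a ≠ 0) (b c p q : ℝ) :
    ∫ x in p..q, sin (a * x) * (b * x + c) =
      (-cos (a * q) * (b * q + c) / a + b * sin (a * q) / a ^ 2)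
        - (-cos (a * p) * (b * p + c) / a + b * sin (a * p) / a ^ 2) := by
  refine integral_eq_sub_of_hasDerivAt
    (f := fun y => -cos (a * y) * (b * y + c) / a + b * sin (a * y) / a ^ 2) (fun x _ => ?_)
    ((by fun_prop : Continuous fun x => sin (a * x) * (b * x + c)).intervalIntegrable _ _)
  have hax : HasDerivAt (fun y => a * y) a x := by simpa using (hasDerivAt_id x).const_mul a
  have hl : HasDerivAt (fun y => b * y + c) b x := by
    simpa using ((hasDerivAt_id x).const_mul b).add_const c
  convert ((hax.cos.neg.mul hl).div_const a).add ((hax.sin.const_mul b).div_const (a ^ 2)) using 1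
  · funext y
    simp only [Pi.add_apply, Pi.mul_apply, Pi.neg_apply]
  · simp only [Pi.neg_apply]
    field_simp
    ring

theorem integral_mul_hatFn {g : ℝ → ℝ} (hg : Continuous g) {M i : ℕ} (hi : 1 ≤ i)
    (hiM : i + 1 ≤ M) :
    ∫ x in (0 : ℝ)..1, g x * hatFn M i x =
      (∫ x in ((i : ℝ) - 1) / M..(i : ℝ) / M, g x * (M * x + (1 - i)))
        + ∫ x in (i : ℝ) / M..((i : ℝ) + 1) / M, g x * (-M * x + (i + 1)) := by
  have hM : (0 : ℝ) < M := by exact_mod_cast (show 0 < M by omega)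
  have hi' : (1 : ℝ) ≤ i := by exact_mod_cast hi
  have hiM' : (i : ℝ) + 1 ≤ M := by exact_mod_cast hiM
  set p₁ : ℝ := ((i : ℝ) - 1) / M
  set p₂ : ℝ := (i : ℝ) / M
  set p₃ : ℝ := ((i : ℝ) + 1) / M
  have h₀₁ : 0 ≤ p₁ := div_nonneg (by linarith) hM.le
  have h₁₂ : p₁ ≤ p₂ := div_le_div_of_nonneg_right (by linarith) hM.le
  have h₂₃ : p₂ ≤ p₃ := div_le_div_of_nonneg_right (by linarith) hM.le
  have h₃₄ : p₃ ≤ 1 := (div_le_one hM).2 hiM'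
  have hint : ∀ p q : ℝ, IntervalIntegrable (fun x => g x * hatFn M i x) volume p q :=
    fun p q => (hg.mul (continuous_hatFn M i)).intervalIntegrable p q
  have hleft : ∫ x in (0 : ℝ)..p₁, g x * hatFn M i x = 0 := by
    refine (integral_congr fun x hx => ?_).trans integral_zero
    rw [Set.uIcc_of_le h₀₁] at hx
    rw [hatFn_eq_zero_of_le hM hx.2, mul_zero]
  have hright : ∫ x in p₃..1, g x * hatFn M i x = 0 := by
    refine (integral_congr fun x hx => ?_).trans integral_zero
    rw [Set.uIcc_of_le h₃₄] at hx
    rw [hatFn_eq_zero_of_ge hM hx.1, mul_zero]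
  have hrise : Set.EqOn (fun x => g x * hatFn M i x)
      (fun x => g x * (M * x + (1 - i))) (Set.uIcc p₁ p₂) :=
    fun x hx => by
      rw [Set.uIcc_of_le h₁₂] at hx
      simp only [hatFn_eq_of_mem_Icc_left hM hx]
  have hfall : Set.EqOn (fun x => g x * hatFn M i x)
      (fun x => g x * (-M * x + (i + 1))) (Set.uIcc p₂ p₃) :=
    fun x hx => by
      rw [Set.uIcc_of_le h₂₃] at hx
      simp only [hatFn_eq_of_mem_Icc_right hM hx]
  rw [← integral_add_adjacent_intervals (hint 0 p₁) (hint p₁ 1),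
    ← integral_add_adjacent_intervals (hint p₁ p₂) (hint p₂ 1),
    ← integral_add_adjacent_intervals (hint p₂ p₃) (hint p₃ 1), hleft, hright,
    integral_congr hrise, integral_congr hfall, zero_add, add_zero]

theorem integral_sin_mul_hatFn {a : ℝ} (ha : a ≠ 0) {M i : ℕ} (hi : 1 ≤ i) (hiM : i + 1 ≤ M) :
    ∫ x in (0 : ℝ)..1, sin (a * x) * hatFn M i x =
      -(M / a ^ 2) * (sin (a * (((i : ℝ) + 1) / M)) - 2 * sin (a * ((i : ℝ) / M))
        + sin (a * (((i : ℝ) - 1) / M))) := by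
  have hM : (M : ℝ) ≠ 0 := by exact_mod_cast (show M ≠ 0 by omega)
  rw [integral_mul_hatFn (by fun_prop) hi hiM, integral_sin_mul_affine ha,
    integral_sin_mul_affine ha]
  simp only [neg_mul (M : ℝ), mul_div_cancel₀ _ hM]
  field_simp
  ring

section SummationByParts

variable {R : Type*} [CommRing R]

theorem sum_Icc_mul_succ_add (f g : ℕ → R) (N : ℕ) :
    ∑ i ∈ Icc 1 N, f i * g (i + 1) + f 0 * g 1
      = ∑ i ∈ Icc 1 N, f (i - 1) * g i + f N * g (N + 1) := by
  induction N with
  | zero => simp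
  | succ N ih =>
    rw [sum_Icc_succ_top (by omega), sum_Icc_succ_top (by omega), add_right_comm, ih]
    simp only [Nat.add_sub_cancel]

theorem sum_Icc_mul_secondDiff_eq (f g : ℕ → R) {N : ℕ} (hf : f 0 = 0) (hg : g (N + 1) = 0) :
    ∑ i ∈ Icc 1 N, f i * (g (i + 1) - 2 * g i + g (i - 1))
      = ∑ i ∈ Icc 1 N, (f (i - 1) * g i + f i * g (i - 1) - 2 * (f i * g i)) := by
  have hshift := sum_Icc_mul_succ_add f g N
  rw [hf, hg, zero_mul, mul_zero, add_zero, add_zero] at hshift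
  calc ∑ i ∈ Icc 1 N, f i * (g (i + 1) - 2 * g i + g (i - 1))
      = ∑ i ∈ Icc 1 N, f i * g (i + 1) + ∑ i ∈ Icc 1 N, (f i * g (i - 1) - 2 * (f i * g i)) := by
        rw [← sum_add_distrib]
        exact sum_congr rfl fun _ _ => by ring
    _ = _ := by
        rw [hshift, ← sum_add_distrib]
        exact sum_congr rfl fun _ _ => by ring

theorem sum_Icc_mul_secondDiff_comm (f g : ℕ → R) {N : ℕ} (hf₀ : f 0 = 0) (hg₀ : g 0 = 0)
    (hf : f (N + 1) = 0) (hg : g (N + 1) = 0) :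
    ∑ i ∈ Icc 1 N, f i * (g (i + 1) - 2 * g i + g (i - 1))
      = ∑ i ∈ Icc 1 N, g i * (f (i + 1) - 2 * f i + f (i - 1)) := by
  rw [sum_Icc_mul_secondDiff_eq f g hf₀ hg, sum_Icc_mul_secondDiff_eq g f hg₀ hf]
  exact sum_congr rfl fun _ _ => by ring

end SummationByParts

theorem fcoef_eq_neg_sum_d2q_mul_sin {n : ℕ} (hn : n ≠ 0) {M : ℕ} {ξ : ℕ → ℝ} (hξ₀ : ξ 0 = 0)
    (hξM : ξ M = 0) :
    fcoef M ξ n = -(√2 / ((n : ℝ) ^ 2 * π ^ 2)) *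
      ((1 / (M : ℝ)) * ∑ i ∈ Icc 1 (M - 1), d2q M ξ i * sin (n * π * ((i : ℝ) / M))) := by
  rcases M with _ | N
  · simp [fcoef, plf]
  have ha : (n : ℝ) * π ≠ 0 := mul_ne_zero (Nat.cast_ne_zero.2 hn) pi_ne_zero
  set s : ℕ → ℝ := fun j => sin (n * π * ((j : ℝ) / (N + 1 : ℕ)))
  have hs₀ : s 0 = 0 := by simp [s]
  have hs : s (N + 1) = 0 := by
    simp only [s]
    rw [div_self (by positivity), mul_one, sin_nat_mul_pi]
  have hnodes : fcoef (N + 1) ξ n = -(√2 * (N + 1 : ℕ) / ((n : ℝ) * π) ^ 2) *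
      ∑ i ∈ Icc 1 N, ξ i * (s (i + 1) - 2 * s i + s (i - 1)) := by
    simp only [fcoef, plf, mul_sum]
    rw [intervalIntegral.integral_finsetSum
      fun i _ => Continuous.intervalIntegrable (by fun_prop) _ _, Nat.add_sub_cancel]
    refine sum_congr rfl fun i hi => ?_
    obtain ⟨hi₁, hiN⟩ := mem_Icc.1 hi
    calc ∫ x in (0 : ℝ)..1, √2 * sin (n * π * x) * (ξ i * hatFn (N + 1) i x)
        = √2 * ξ i * ∫ x in (0 : ℝ)..1, sin (n * π * x) * hatFn (N + 1) i x := by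
          rw [← intervalIntegral.integral_const_mul]
          exact integral_congr fun x _ => by ring
      _ = _ := by
          rw [integral_sin_mul_hatFn ha hi₁ (by omega)]
          simp only [s]
          push_cast [Nat.cast_sub hi₁]
          ring
  rw [hnodes, sum_Icc_mul_secondDiff_comm ξ s hξ₀ hs₀ hξM hs, Nat.add_sub_cancel, mul_sum, mul_sum,
    mul_sum]
  refine sum_congr rfl fun i _ => ?_
  simp only [d2q, s]
  field_simp

theorem sq_sum_mul_le_card_mul_sum_sq {ι : Type*} (s : Finset ι) (d w : ι → ℝ)
    (hw : ∀ i ∈ s, |w i| ≤ 1) :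
    (∑ i ∈ s, d i * w i) ^ 2 ≤ #s * ∑ i ∈ s, d i ^ 2 := by
  refine (sum_mul_sq_le_sq_mul_sq s d w).trans ?_
  rw [mul_comm]
  gcongr
  simpa using s.sum_le_card_nsmul (fun i => w i ^ 2) 1
    fun i hi => sq_le_one_iff_abs_le_one _ |>.2 (hw i hi)

theorem abs_fcoef_le {n : ℕ} (hn : n ≠ 0) {M : ℕ} {ξ : ℕ → ℝ} (hξ₀ : ξ 0 = 0) (hξM : ξ M = 0) :
    |fcoef M ξ n| ≤ √2 / ((n : ℝ) ^ 2 * π ^ 2) *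
      √((1 / (M : ℝ)) * ∑ i ∈ Icc 1 (M - 1), (d2q M ξ i) ^ 2) := by
  rw [fcoef_eq_neg_sum_d2q_mul_sin hn hξ₀ hξM, abs_mul, abs_neg, abs_of_nonneg (by positivity)]
  gcongr
  refine abs_le_sqrt ?_
  have hcard : (#(Icc 1 (M - 1)) : ℝ) ≤ M := by simp
  calc ((1 / (M : ℝ)) * ∑ i ∈ Icc 1 (M - 1), d2q M ξ i * sin (n * π * ((i : ℝ) / M))) ^ 2
      ≤ (1 / (M : ℝ)) ^ 2 * (M * ∑ i ∈ Icc 1 (M - 1), d2q M ξ i ^ 2) := by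
        rw [mul_pow]
        gcongr
        exact (sq_sum_mul_le_card_mul_sum_sq _ _ _ fun i _ => abs_sin_le_one _).trans
          (by gcongr)
    _ = (1 / (M : ℝ)) * ∑ i ∈ Icc 1 (M - 1), d2q M ξ i ^ 2 := by
        rcases eq_or_ne (M : ℝ) 0 with hM | hM
        · simp [hM]
        · field_simp

theorem summable_nat_add_one_rpow {q : ℝ} (hq : q < -1) :
    Summable fun n : ℕ => ((n : ℝ) + 1) ^ q := by
  simpa using (summable_nat_add_iff 1).2 (Real.summable_nat_rpow.2 hq)

theorem summable_rpow_mul_sq_and_tsum_le {κ p B : ℝ} (hκ : 0 ≤ κ) (hp : p < 3 / 2) {c : ℕ → ℝ}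
    (hc : ∀ n, |c n| ≤ B / ((n : ℝ) + 1) ^ 2) :
    Summable (fun n : ℕ => (κ * ((n : ℝ) + 1) ^ 2) ^ p * c n ^ 2) ∧
      ∑' n : ℕ, (κ * ((n : ℝ) + 1) ^ 2) ^ p * c n ^ 2
        ≤ κ ^ p * B ^ 2 * ∑' n : ℕ, ((n : ℝ) + 1) ^ (2 * p - 4) := by
  have hZ := summable_nat_add_one_rpow (q := 2 * p - 4) (by linarith)
  have hterm : ∀ n : ℕ, (κ * ((n : ℝ) + 1) ^ 2) ^ p * c n ^ 2
      ≤ κ ^ p * B ^ 2 * ((n : ℝ) + 1) ^ (2 * p - 4) := by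
    intro n
    set x : ℝ := (n : ℝ) + 1
    have hx : 0 < x := by positivity
    calc (κ * x ^ 2) ^ p * c n ^ 2 = κ ^ p * x ^ (2 * p) * |c n| ^ 2 := by
          rw [Real.mul_rpow hκ (by positivity), ← Real.rpow_natCast, ← Real.rpow_mul hx.le, sq_abs]
          norm_num
      _ ≤ κ ^ p * x ^ (2 * p) * (B / x ^ 2) ^ 2 := by gcongr; exact hc n
      _ = κ ^ p * B ^ 2 * x ^ (2 * p - 4) := by
          rw [Real.rpow_sub hx, Real.rpow_ofNat]
          field_simp
  have hnonneg : ∀ n : ℕ, 0 ≤ (κ * ((n : ℝ) + 1) ^ 2) ^ p * c n ^ 2 := fun n => by positivity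
  have hsum := Summable.of_nonneg_of_le hnonneg hterm (hZ.mul_left _)
  refine ⟨hsum, ?_⟩
  rw [← tsum_mul_left]
  exact hsum.tsum_le_tsum hterm (hZ.mul_left _)

theorem stmt7_general (δ : ℝ) (hδ : 0 < δ) (γ : ℝ) (hγ : γ < 3 / 4) :
    ∃ C : ℝ, 0 < C ∧ ∀ M : ℕ, 2 ≤ M → ∀ ξ : ℕ → ℝ, ξ 0 = 0 → (∀ i, M ≤ i → ξ i = 0) →
      (∀ n : ℕ, 1 ≤ n →
        |fcoef M ξ n| ≤ Real.sqrt 2 / ((n : ℝ) ^ 2 * Real.pi ^ 2) *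
          Real.sqrt ((1 / (M : ℝ)) * ∑ i ∈ Finset.Icc 1 (M - 1), (d2q M ξ i) ^ 2)) ∧
      Summable (fun n => (kEig δ n) ^ (2 * γ) * (fcoef M ξ (n + 1)) ^ 2) ∧
      Real.sqrt (∑' n, (kEig δ n) ^ (2 * γ) * (fcoef M ξ (n + 1)) ^ 2)
        ≤ C * Real.sqrt ((1 / (M : ℝ)) * ∑ i ∈ Finset.Icc 1 (M - 1), (d2q M ξ i) ^ 2) := by
  set Z := ∑' n : ℕ, ((n : ℝ) + 1) ^ (2 * (2 * γ) - 4)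
  have hZ : 0 < Z := (summable_nat_add_one_rpow (by linarith)).tsum_pos
    (fun n => by positivity) 0 (by positivity)
  refine ⟨√((δ * π ^ 2) ^ (2 * γ) * (2 / π ^ 4) * Z), by positivity, fun M _ ξ hξ₀ hξM => ?_⟩
  set S := (1 / (M : ℝ)) * ∑ i ∈ Icc 1 (M - 1), (d2q M ξ i) ^ 2
  have hS : 0 ≤ S := by positivity
  have hcoef : ∀ n, n ≠ 0 → |fcoef M ξ n| ≤ √2 / ((n : ℝ) ^ 2 * π ^ 2) * √S :=
    fun n hn => abs_fcoef_le hn hξ₀ (hξM M le_rfl)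
  obtain ⟨hsum, hle⟩ := summable_rpow_mul_sq_and_tsum_le (κ := δ * π ^ 2) (p := 2 * γ)
    (B := √2 / π ^ 2 * √S) (by positivity) (by linarith) (c := fun n => fcoef M ξ (n + 1))
    fun n => (hcoef (n + 1) n.succ_ne_zero).trans_eq (by push_cast; field_simp)
  refine ⟨fun n hn => hcoef n (Nat.one_le_iff_ne_zero.1 hn), hsum, ?_⟩
  calc √(∑' n, (kEig δ n) ^ (2 * γ) * (fcoef M ξ (n + 1)) ^ 2)
      ≤ √((δ * π ^ 2) ^ (2 * γ) * (√2 / π ^ 2 * √S) ^ 2 * Z) := Real.sqrt_le_sqrt hle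
    _ = √((δ * π ^ 2) ^ (2 * γ) * (2 / π ^ 4) * Z) * √S := by
        have hB : (√2 / π ^ 2 * √S) ^ 2 = 2 / π ^ 4 * S := by
          rw [mul_pow, div_pow, Real.sq_sqrt zero_le_two, Real.sq_sqrt hS]
          ring
        rw [hB, ← Real.sqrt_mul (by positivity)]
        ring_nf

/-- The finite element space `V` is contained in `D(A^γ)` for `γ < 3/4`:
for `φ₀ = Σ ξⁱvⁱ ∈ V` the Fourier coefficients satisfy
`|(ψₙ,φ₀)| ≤ (√2/(n²π²)) (Δx Σ (D²ξ)ᵢ²)^{1/2}` and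
`‖A^γ φ₀‖ ≤ C_γ (Δx Σ (D²ξ)ᵢ²)^{1/2}`. -/
theorem stmt7 (δ : ℝ) (hδ : 0 < δ) (γ : ℝ) (hγ0 : 0 < γ) (hγ : γ < 3 / 4) :
    ∃ C : ℝ, 0 < C ∧ ∀ M : ℕ, 2 ≤ M → ∀ ξ : ℕ → ℝ, ξ 0 = 0 → (∀ i, M ≤ i → ξ i = 0) →
      (∀ n : ℕ, 1 ≤ n →
        |fcoef M ξ n| ≤ Real.sqrt 2 / ((n : ℝ) ^ 2 * Real.pi ^ 2) *
          Real.sqrt ((1 / (M : ℝ)) * ∑ i ∈ Finset.Icc 1 (M - 1), (d2q M ξ i) ^ 2)) ∧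
      Summable (fun n => (kEig δ n) ^ (2 * γ) * (fcoef M ξ (n + 1)) ^ 2) ∧
      Real.sqrt (∑' n, (kEig δ n) ^ (2 * γ) * (fcoef M ξ (n + 1)) ^ 2)
        ≤ C * Real.sqrt ((1 / (M : ℝ)) * ∑ i ∈ Finset.Icc 1 (M - 1), (d2q M ξ i) ^ 2) :=
  stmt7_general δ hδ γ hγ
end
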